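/- Let h : |Δ| → ℚ be a support map on a fan Δ in a lattice N. If there are linear forms u_σ on N_ℚ, one for each σ ∈ Δ, such that for every pair σ, τ ∈ Δ one has h|_σ = u_σ|_σ and h|_τ ≤ u_σ|_τ, then h is a convex support map on Δ. Conversely, if Δ is complete (i.e. |Δ| = N_ℚ) and h is convex, then h or −h satisfies the above condition. -/

import Mathlib

/-! Convex geometry over ℚ: polyhedral cones, quasifans, fans, support maps. -/

namespace ToricQuot

variable {E V : Type} [AddCommGroup E] [Module ℚ E] [AddCommGroup V] [Module ℚ V]

/-- The convex cone generated by a set: all finite nonnegative rational combinations. -/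
def coneHull (s : Set E) : Set E :=
  {x | ∃ (m : ℕ) (c : Fin m → ℚ) (v : Fin m → E),
    (∀ i, 0 ≤ c i) ∧ (∀ i, v i ∈ s) ∧ x = ∑ i, c i • v i}

/-- A (rational) polyhedral convex cone: the conic hull of a finite set. -/
def IsPolyCone (σ : Set E) : Prop := ∃ s : Set E, s.Finite ∧ σ = coneHull s

/-- `F` is a face of the cone `σ`: it is cut out of `σ` by a supporting linear form. -/
def IsFaceOf (F σ : Set E) : Prop :=
  ∃ u : E →ₗ[ℚ] ℚ, (∀ x ∈ σ, 0 ≤ u x) ∧ F = {x ∈ σ | u x = 0}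

/-- The relative interior of a cone: points not lying on any proper face. -/
def relint (σ : Set E) : Set E :=
  {x ∈ σ | ∀ F, IsFaceOf F σ → x ∈ F → F = σ}

/-- A quasifan: a finite set of polyhedral cones, closed under taking faces, such that
the intersection of any two of its cones is a face of each. -/
def IsQuasifan (Λ : Set (Set E)) : Prop :=
  Λ.Finite ∧ (∀ σ ∈ Λ, IsPolyCone σ) ∧
  (∀ σ ∈ Λ, ∀ F, IsFaceOf F σ → F ∈ Λ) ∧
  (∀ σ ∈ Λ, ∀ τ ∈ Λ, IsFaceOf (σ ∩ τ) σ)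

/-- A cone is strictly convex (pointed) if it contains no line. -/
def IsPointed (σ : Set E) : Prop := σ ∩ (-σ) ⊆ {0}

/-- A fan: a quasifan all of whose cones are strictly convex. -/
def IsFan (Λ : Set (Set E)) : Prop := IsQuasifan Λ ∧ ∀ σ ∈ Λ, IsPointed σ

/-- The support of a quasifan. -/
def fanSupp (Λ : Set (Set E)) : Set E := ⋃₀ Λ

/-- A support map on a quasifan `Δ`: a map that is linear on every cone of `Δ`. -/
def IsSupportMap (Δ : Set (Set E)) (h : E → V) : Prop :=
  ∀ σ ∈ Δ, ∃ L : E →ₗ[ℚ] V, ∀ x ∈ σ, h x = L x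

/-- The graph of a support map over the support of the quasifan. -/
def graphOf (Δ : Set (Set E)) (h : E → V) : Set (E × V) :=
  {p | ∃ v ∈ fanSupp Δ, p = (v, h v)}

/-- The cone generated by the graph of a support map. -/
def gammaCone (Δ : Set (Set E)) (h : E → V) : Set (E × V) := coneHull (graphOf Δ h)

/-- The filled graph `Λ_h`: the minimal subquasifan of the face quasifan of `γ` whose
support contains the graph, i.e. it is generated by the faces of `γ` whose relative
interior meets the graph. -/
def filledGraph (Δ : Set (Set E)) (h : E → V) : Set (Set (E × V)) :=
  {δ | ∃ δ', IsFaceOf δ' (gammaCone Δ h) ∧ (relint δ' ∩ graphOf Δ h).Nonempty ∧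
    IsFaceOf δ δ'}

/-- A support map is convex if the projection to the first factor is injective on the
support of the filled graph. -/
def IsConvexSM (Δ : Set (Set E)) (h : E → V) : Prop :=
  IsSupportMap Δ h ∧ Set.InjOn (Prod.fst : E × V → E) (⋃₀ filledGraph Δ h)

/-- The quasifan `Σ_h` associated to a convex support map: the projections of the cones
of the filled graph. -/
def sigmaFan (Δ : Set (Set E)) (h : E → V) : Set (Set E) :=
  (Set.image (Prod.fst : E × V → E)) '' filledGraph Δ h

/-- A strictly convex support map. -/
def IsStrictlyConvexSM (Δ : Set (Set E)) (h : E → V) : Prop :=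
  IsConvexSM Δ h ∧ sigmaFan Δ h = Δ


end ToricQuot

/-!
If `h ≤ u_σ` on `|Δ|` with equality on `σ`, the form `(x, t) ↦ u_σ x - t` is nonnegative on `γ`
and vanishes on every face of `γ` whose relative interior meets the graph over `σ`. Hence each
point of the filled graph lies on the graph of some `u_σ` and below the graph of every `u_τ`,
which makes the projection injective.

Conversely, pick `v₀` in the relative interior of `σ` and the face of `γ` containing `(v₀, h v₀)`
in its relative interior, cut out by `(x, t) ↦ φ x + c t`. By completeness this form is
nonnegative on the whole graph, and it vanishes over `σ`. If `c ≠ 0`, then `-φ / c` is a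
supporting form along `σ` of `h` or of `-h`, according to the sign of `c`. If `c = 0` the face is
`γ` itself, so convexity makes `γ` a graph and `h` linear. Supporting forms of `h` and of `-h`
would squeeze `h` between two linear forms, again making `h` linear, so one sign serves all `σ`.
-/

namespace ToricQuot

section Cones

variable {E V : Type} [AddCommGroup E] [Module ℚ E] [AddCommGroup V] [Module ℚ V]

theorem coneHull_eq_hull (s : Set E) : coneHull s = PointedCone.hull ℚ s := by
  ext x
  simp only [SetLike.mem_coe, Submodule.mem_span_set']
  constructor
  · rintro ⟨m, c, v, hc, hv, rfl⟩
    exact ⟨m, fun i => ⟨c i, hc i⟩, fun i => ⟨v i, hv i⟩, rfl⟩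
  · rintro ⟨m, c, v, rfl⟩
    exact ⟨m, fun i => c i, fun i => v i, fun i => (c i).2, fun i => (v i).2, rfl⟩

theorem subset_coneHull (s : Set E) : s ⊆ coneHull s := by
  rw [coneHull_eq_hull]
  exact PointedCone.subset_hull

theorem coneHull_mono {s t : Set E} (hst : s ⊆ t) : coneHull s ⊆ coneHull t := by
  rw [coneHull_eq_hull, coneHull_eq_hull]
  exact Submodule.span_mono hst

theorem add_mem_coneHull {s : Set E} {x y : E} (hx : x ∈ coneHull s) (hy : y ∈ coneHull s) :
    x + y ∈ coneHull s := by
  rw [coneHull_eq_hull] at *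
  exact add_mem hx hy

theorem map_nonneg_of_mem_coneHull {s : Set E} {u : E →ₗ[ℚ] ℚ} (hu : ∀ v ∈ s, 0 ≤ u v)
    {x : E} (hx : x ∈ coneHull s) : 0 ≤ u x := by
  rw [coneHull_eq_hull] at hx
  induction hx using Submodule.span_induction with
  | mem v hv => exact hu v hv
  | zero => simp
  | add x y _ _ hx hy => rw [map_add]; positivity
  | smul c x _ hx => rw [← Nonneg.coe_smul, map_smul, smul_eq_mul]; exact mul_nonneg c.2 hx

theorem map_eq_zero_of_mem_coneHull {s : Set E} {u : E →ₗ[ℚ] ℚ} (hu : ∀ v ∈ s, u v = 0)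
    {x : E} (hx : x ∈ coneHull s) : u x = 0 := by
  have hpos := map_nonneg_of_mem_coneHull (fun v hv => (hu v hv).ge) hx
  have hneg := map_nonneg_of_mem_coneHull (u := -u) (fun v hv => by simp [hu v hv]) hx
  simp only [LinearMap.neg_apply, Left.nonneg_neg_iff] at hneg
  exact le_antisymm hneg hpos

theorem apply_mem_coneHull_image {s : Set E} (f : E →ₗ[ℚ] V) {x : E} (hx : x ∈ coneHull s) :
    f x ∈ coneHull (f '' s) := by
  obtain ⟨m, c, v, hc, hv, rfl⟩ := hx
  exact ⟨m, c, fun i => f (v i), hc, fun i => ⟨v i, hv i, rfl⟩, by simp⟩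

theorem _root_.LinearMap.eq_zero_of_forall_nonneg (φ : E →ₗ[ℚ] ℚ) (hφ : ∀ x, 0 ≤ φ x) : φ = 0 := by
  ext x
  have := hφ (-x)
  rw [map_neg, Left.nonneg_neg_iff] at this
  exact le_antisymm this (hφ x)

theorem isFaceOf_self (σ : Set E) : IsFaceOf σ σ :=
  ⟨0, fun _ _ => le_rfl, by simp⟩

theorem IsFaceOf.subset {F σ : Set E} (hF : IsFaceOf F σ) : F ⊆ σ := by
  obtain ⟨u, -, rfl⟩ := hF
  exact Set.sep_subset σ _

theorem sep_coneHull_eq_coneHull_sep {s : Set E} {u : E →ₗ[ℚ] ℚ} (hu : ∀ v ∈ s, 0 ≤ u v) :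
    {x ∈ coneHull s | u x = 0} = coneHull {v ∈ s | u v = 0} := by
  apply Set.Subset.antisymm
  · rintro _ ⟨⟨m, c, v, hc, hv, rfl⟩, hx⟩
    simp only [map_sum, map_smul, smul_eq_mul] at hx
    have hterm := (Finset.sum_eq_zero_iff_of_nonneg
      fun i _ => mul_nonneg (hc i) (hu _ (hv i))).1 hx
    rw [coneHull_eq_hull]
    refine Submodule.sum_mem _ fun i _ => ?_
    rcases mul_eq_zero.1 (hterm i (Finset.mem_univ i)) with hci | hvi
    · simp [hci]
    · exact Submodule.smul_mem _ (⟨c i, hc i⟩ : {c : ℚ // 0 ≤ c})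
        (Submodule.subset_span (⟨hv i, hvi⟩ : v i ∈ {v ∈ s | u v = 0}))
  · exact fun x hx => ⟨coneHull_mono (Set.sep_subset s _) hx,
      map_eq_zero_of_mem_coneHull (fun v hv => hv.2) hx⟩

theorem IsFaceOf.exists_eq_coneHull {s F : Set E} (hF : IsFaceOf F (coneHull s)) :
    ∃ t ⊆ s, F = coneHull t := by
  obtain ⟨u, hu, rfl⟩ := hF
  exact ⟨_, Set.sep_subset s _,
    sep_coneHull_eq_coneHull_sep fun v hv => hu v (subset_coneHull s hv)⟩

theorem finite_setOf_isFaceOf {s : Set E} (hs : s.Finite) :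
    {F | IsFaceOf F (coneHull s)}.Finite := by
  refine (hs.finite_subsets.image coneHull).subset fun F hF => ?_
  obtain ⟨t, hts, rfl⟩ := hF.exists_eq_coneHull
  exact ⟨t, hts, rfl⟩

/-- Perturbing the form `w` cutting `G` out of `F` by a large multiple of the form `u` cutting
`F` out of `coneHull s` makes it nonnegative on the finitely many generators. -/
theorem IsFaceOf.trans {s F G : Set E} (hs : s.Finite) (hGF : IsFaceOf G F)
    (hF : IsFaceOf F (coneHull s)) : IsFaceOf G (coneHull s) := by
  obtain ⟨u, hu, rfl⟩ := hF
  obtain ⟨w, hw, rfl⟩ := hGF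
  obtain ⟨B, hB⟩ := (hs.image fun v => -w v / u v).bddAbove
  set z : E →ₗ[ℚ] ℚ := w + (B + 1) • u
  have hz_pos : ∀ v ∈ s, 0 < u v → 0 < z v := by
    intro v hv huv
    have hle : -w v / u v ≤ B := hB ⟨v, hv, rfl⟩
    rw [div_le_iff₀ huv] at hle
    simp only [z, LinearMap.add_apply, LinearMap.smul_apply, smul_eq_mul]
    linarith
  have hz_of_eq : ∀ v ∈ s, u v = 0 → z v = w v := fun v _ huv => by simp [z, huv]
  have hz_nonneg : ∀ v ∈ s, 0 ≤ z v := by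
    intro v hv
    rcases (hu v (subset_coneHull s hv)).lt_or_eq with huv | huv
    · exact (hz_pos v hv huv).le
    · rw [hz_of_eq v hv huv.symm]
      exact hw v ⟨subset_coneHull s hv, huv.symm⟩
  refine ⟨z, fun x => map_nonneg_of_mem_coneHull hz_nonneg, ?_⟩
  apply Set.Subset.antisymm
  · rintro x ⟨⟨hx, hux⟩, hwx⟩
    exact ⟨hx, by simp [z, hux, hwx]⟩
  · intro x hx
    rw [sep_coneHull_eq_coneHull_sep hz_nonneg] at hx
    have hgen : ∀ v ∈ {v ∈ s | z v = 0}, u v = 0 ∧ w v = 0 := by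
      rintro v ⟨hv, hzv⟩
      have huv : u v = 0 :=
        (hu v (subset_coneHull s hv)).eq_or_lt.elim Eq.symm fun h => absurd hzv (hz_pos v hv h).ne'
      exact ⟨huv, hz_of_eq v hv huv ▸ hzv⟩
    exact ⟨⟨coneHull_mono (Set.sep_subset s _) hx,
      map_eq_zero_of_mem_coneHull (fun v hv => (hgen v hv).1) hx⟩,
      map_eq_zero_of_mem_coneHull (fun v hv => (hgen v hv).2) hx⟩

theorem eq_zero_of_mem_relint {σ : Set E} {x : E} (hx : x ∈ relint σ) {u : E →ₗ[ℚ] ℚ}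
    (hu : ∀ y ∈ σ, 0 ≤ u y) (hux : u x = 0) : ∀ y ∈ σ, u y = 0 := by
  intro y hy
  rw [← hx.2 _ ⟨u, hu, rfl⟩ ⟨hx.1, hux⟩] at hy
  exact hy.2

/-- The sum of the generators lies in the relative interior: a supporting form vanishing there
vanishes on every generator. -/
theorem relint_coneHull_nonempty {s : Set E} (hs : s.Finite) :
    (relint (coneHull s)).Nonempty := by
  have hsum : ∑ v ∈ hs.toFinset, v ∈ coneHull s := by
    rw [coneHull_eq_hull]
    exact Submodule.sum_mem _ fun v hv => Submodule.subset_span (hs.mem_toFinset.1 hv)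
  refine ⟨_, hsum, fun F ⟨u, hu, hF⟩ hmem => ?_⟩
  rw [hF] at hmem ⊢
  have hgen : ∀ v ∈ s, u v = 0 := by
    intro v hv
    have := hmem.2
    rw [map_sum, Finset.sum_eq_zero_iff_of_nonneg
      fun v hv => hu v (subset_coneHull s (hs.mem_toFinset.1 hv))] at this
    exact this v (hs.mem_toFinset.2 hv)
  exact Set.sep_eq_self_iff_mem_true.2 fun x hx => map_eq_zero_of_mem_coneHull hgen hx

/-- The minimal face containing `p`, which exists since there are finitely many faces. -/
theorem exists_isFaceOf_mem_relint {s : Set E} (hs : s.Finite) {p : E} (hp : p ∈ coneHull s) :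
    ∃ F, IsFaceOf F (coneHull s) ∧ p ∈ relint F := by
  obtain ⟨F, ⟨hF, hpF⟩, hmin⟩ := ((finite_setOf_isFaceOf hs).subset
    fun F (hF : IsFaceOf F (coneHull s) ∧ p ∈ F) => hF.1).exists_minimal
    ⟨coneHull s, isFaceOf_self _, hp⟩
  exact ⟨F, hF, hpF, fun G hGF hpG =>
    hGF.subset.antisymm (hmin ⟨hGF.trans hs hF, hpG⟩ hGF.subset)⟩

end Cones

section SupportMaps

variable {E V : Type} {Δ : Set (Set E)}

theorem mem_graphOf {h : E → V} {v : E} (hv : v ∈ fanSupp Δ) : (v, h v) ∈ graphOf Δ h :=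
  ⟨v, hv, rfl⟩

variable [AddCommGroup E] [Module ℚ E] [AddCommGroup V] [Module ℚ V]

theorem graphOf_subset_gammaCone (h : E → V) : graphOf Δ h ⊆ gammaCone Δ h :=
  subset_coneHull _

theorem sUnion_filledGraph_subset_gammaCone (h : E → V) :
    ⋃₀ filledGraph Δ h ⊆ gammaCone Δ h := by
  rintro p ⟨δ, ⟨δ', hδ', -, hδ⟩, hp⟩
  exact hδ'.subset (hδ.subset hp)

/-- On each cone `coneHull s` of `Δ` the graph of `h` is the image of a linear map, so the
graph points over the generators generate `gammaCone Δ h`. -/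
theorem exists_finite_gammaCone_eq_coneHull {h : E → V} (hfin : Δ.Finite)
    (hpoly : ∀ σ ∈ Δ, IsPolyCone σ) (hsm : IsSupportMap Δ h) :
    ∃ G : Set (E × V), G.Finite ∧ gammaCone Δ h = coneHull G := by
  choose! gen hgen using hpoly
  have hgen_sub : ∀ σ ∈ Δ, gen σ ⊆ σ := fun σ hσ =>
    (subset_coneHull _).trans (hgen σ hσ).2.symm.subset
  set G := ⋃ σ ∈ Δ, (fun v => (v, h v)) '' gen σ
  have hG : G ⊆ graphOf Δ h := by
    simp only [G, Set.iUnion_subset_iff]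
    rintro σ hσ _ ⟨v, hv, rfl⟩
    exact mem_graphOf (Set.subset_sUnion_of_mem hσ (hgen_sub σ hσ hv))
  refine ⟨G, hfin.biUnion fun σ hσ => (hgen σ hσ).1.image _, ?_⟩
  refine (Set.Subset.antisymm ?_ (coneHull_mono hG))
  rw [gammaCone, coneHull_eq_hull, coneHull_eq_hull, SetLike.coe_subset_coe, Submodule.span_le,
    ← coneHull_eq_hull]
  rintro _ ⟨v, ⟨σ, hσ, hv⟩, rfl⟩
  obtain ⟨L, hL⟩ := hsm σ hσ
  have hgraph : (LinearMap.id.prod L) '' gen σ ⊆ G := by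
    rintro _ ⟨w, hw, rfl⟩
    exact Set.mem_biUnion hσ ⟨w, hw, by simp [hL w (hgen_sub σ hσ hw)]⟩
  have hv' : v ∈ coneHull (gen σ) := (hgen σ hσ).2.subset hv
  simpa [hL v hv] using coneHull_mono hgraph (apply_mem_coneHull_image (LinearMap.id.prod L) hv')

theorem mem_filledGraph_of_mem_relint {h : E → V} {F : Set (E × V)}
    (hF : IsFaceOf F (gammaCone Δ h)) {p : E × V} (hp : p ∈ relint F) (hpg : p ∈ graphOf Δ h) :
    F ∈ filledGraph Δ h :=
  ⟨F, hF, ⟨p, hp, hpg⟩, isFaceOf_self F⟩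

theorem exists_isFaceOf_gammaCone_mem_relint {h : E → V} (hfin : Δ.Finite)
    (hpoly : ∀ σ ∈ Δ, IsPolyCone σ) (hsm : IsSupportMap Δ h) {p : E × V}
    (hp : p ∈ graphOf Δ h) : ∃ F, IsFaceOf F (gammaCone Δ h) ∧ p ∈ relint F := by
  obtain ⟨G, hGfin, hγ⟩ := exists_finite_gammaCone_eq_coneHull hfin hpoly hsm
  rw [hγ]
  exact exists_isFaceOf_mem_relint hGfin (hγ ▸ graphOf_subset_gammaCone h hp)

theorem sUnion_filledGraph_subset_graphOf {h : E → V} (hfin : Δ.Finite)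
    (hpoly : ∀ σ ∈ Δ, IsPolyCone σ) (hsm : IsSupportMap Δ h) (hcomp : fanSupp Δ = Set.univ)
    (hinj : Set.InjOn Prod.fst (⋃₀ filledGraph Δ h)) :
    ⋃₀ filledGraph Δ h ⊆ graphOf Δ h := by
  intro p hp
  have hq : (p.1, h p.1) ∈ graphOf Δ h := mem_graphOf (hcomp ▸ Set.mem_univ p.1)
  obtain ⟨F, hF, hqF⟩ := exists_isFaceOf_gammaCone_mem_relint hfin hpoly hsm hq
  rw [hinj hp ⟨F, mem_filledGraph_of_mem_relint hF hqF hq, hqF.1⟩ rfl]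
  exact hq

theorem exists_linearMap_of_gammaCone_subset_graphOf {h : E → V}
    (hcomp : fanSupp Δ = Set.univ) (hγ : gammaCone Δ h ⊆ graphOf Δ h) :
    ∃ L : E →ₗ[ℚ] V, ∀ v, h v = L v := by
  have hmem : ∀ v, (v, h v) ∈ gammaCone Δ h := fun v =>
    graphOf_subset_gammaCone h (mem_graphOf (hcomp ▸ Set.mem_univ v))
  have hadd : ∀ x y, h (x + y) = h x + h y := by
    intro x y
    obtain ⟨v, -, hv⟩ := hγ (add_mem_coneHull (hmem x) (hmem y))
    simp only [Prod.mk_add_mk, Prod.mk.injEq] at hv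
    rw [hv.1, hv.2]
  exact ⟨(AddMonoidHom.mk' h hadd).toRatLinearMap, fun v => rfl⟩

theorem exists_supportingForm_gammaCone {h : E → V} (hfin : Δ.Finite)
    (hpoly : ∀ σ ∈ Δ, IsPolyCone σ) (hsm : IsSupportMap Δ h) {σ : Set E} (hσ : σ ∈ Δ) :
    ∃ w : E × V →ₗ[ℚ] ℚ, (∀ p ∈ gammaCone Δ h, 0 ≤ w p) ∧ (∀ v ∈ σ, w (v, h v) = 0) ∧
      {p ∈ gammaCone Δ h | w p = 0} ∈ filledGraph Δ h := by
  obtain ⟨s, hs, rfl⟩ := hpoly σ hσ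
  have hgraph : ∀ v ∈ coneHull s, (v, h v) ∈ graphOf Δ h := fun v hv =>
    mem_graphOf (Set.subset_sUnion_of_mem hσ hv)
  obtain ⟨v₀, hv₀⟩ := relint_coneHull_nonempty hs
  obtain ⟨_, ⟨w, hw, rfl⟩, hF⟩ :=
    exists_isFaceOf_gammaCone_mem_relint hfin hpoly hsm (hgraph v₀ hv₀.1)
  refine ⟨w, hw, ?_, mem_filledGraph_of_mem_relint ⟨w, hw, rfl⟩ hF (hgraph v₀ hv₀.1)⟩
  obtain ⟨L, hL⟩ := hsm _ hσ
  have hzero := eq_zero_of_mem_relint hv₀ (u := w.comp (LinearMap.id.prod L))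
    (fun v hv => by simpa [← hL v hv] using hw _ (graphOf_subset_gammaCone h (hgraph v hv)))
    (by simpa [← hL v₀ hv₀.1] using hF.1.2)
  intro v hv
  simpa [← hL v hv] using hzero v hv

end SupportMaps

section Criterion

variable {E : Type} [AddCommGroup E] [Module ℚ E] {Δ : Set (Set E)} {h : E → ℚ}

def HasSupportingForms (Δ : Set (Set E)) (h : E → ℚ) : Prop :=
  ∀ σ ∈ Δ, ∃ u : E →ₗ[ℚ] ℚ, (∀ x ∈ σ, h x = u x) ∧ (∀ τ ∈ Δ, ∀ x ∈ τ, h x ≤ u x)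

theorem snd_le_of_mem_gammaCone {u : E →ₗ[ℚ] ℚ} (hu : ∀ τ ∈ Δ, ∀ x ∈ τ, h x ≤ u x)
    {p : E × ℚ} (hp : p ∈ gammaCone Δ h) : p.2 ≤ u p.1 := by
  have := map_nonneg_of_mem_coneHull
    (u := u.comp (LinearMap.fst ℚ E ℚ) - LinearMap.snd ℚ E ℚ) ?_ hp
  · simpa using this
  · rintro _ ⟨v, ⟨τ, hτ, hv⟩, rfl⟩
    simpa using hu τ hτ v hv

theorem HasSupportingForms.exists_eq_of_mem_sUnion_filledGraph (hu : HasSupportingForms Δ h)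
    {p : E × ℚ} (hp : p ∈ ⋃₀ filledGraph Δ h) :
    ∃ u : E →ₗ[ℚ] ℚ, (∀ τ ∈ Δ, ∀ x ∈ τ, h x ≤ u x) ∧ p.2 = u p.1 := by
  obtain ⟨δ, ⟨δ', hδ', ⟨_, hz, v, ⟨σ, hσ, hv⟩, rfl⟩, hδ⟩, hpδ⟩ := hp
  obtain ⟨u, heq, hle⟩ := hu σ hσ
  set w := u.comp (LinearMap.fst ℚ E ℚ) - LinearMap.snd ℚ E ℚ
  have hw : ∀ q ∈ δ', 0 ≤ w q := fun q hq => by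
    simpa [w] using snd_le_of_mem_gammaCone hle (hδ'.subset hq)
  have hwp := eq_zero_of_mem_relint hz hw (by simp [w, heq v hv]) p (hδ.subset hpδ)
  simp only [w, LinearMap.sub_apply, LinearMap.comp_apply, LinearMap.fst_apply,
    LinearMap.snd_apply, sub_eq_zero] at hwp
  exact ⟨u, hle, hwp.symm⟩

theorem HasSupportingForms.isConvexSM (hsm : IsSupportMap Δ h) (hu : HasSupportingForms Δ h) :
    IsConvexSM Δ h := by
  refine ⟨hsm, fun p hp q hq hpq => Prod.ext hpq ?_⟩
  obtain ⟨u, hu_le, hpu⟩ := hu.exists_eq_of_mem_sUnion_filledGraph hp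
  obtain ⟨u', hu'_le, hqu'⟩ := hu.exists_eq_of_mem_sUnion_filledGraph hq
  have hqp := snd_le_of_mem_gammaCone hu_le (sUnion_filledGraph_subset_gammaCone h hq)
  have hpq' := snd_le_of_mem_gammaCone hu'_le (sUnion_filledGraph_subset_gammaCone h hp)
  rw [hpq] at hpu hpq'
  linarith

def IsSupportingForm (h : E → ℚ) (σ : Set E) (u : E →ₗ[ℚ] ℚ) : Prop :=
  (∀ x ∈ σ, h x = u x) ∧ ∀ x, h x ≤ u x

theorem isSupportingForm_of_forall_eq {σ : Set E} {L : E →ₗ[ℚ] ℚ} (hL : ∀ x, h x = L x) :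
    IsSupportingForm h σ L :=
  ⟨fun x _ => hL x, fun x => (hL x).le⟩

theorem IsSupportingForm.eq_of_neg {σ τ : Set E} {u u' : E →ₗ[ℚ] ℚ}
    (hu : IsSupportingForm h σ u) (hu' : IsSupportingForm (-h) τ u') : ∀ x, h x = u x := by
  have hlow : ∀ x, -u' x ≤ h x := fun x => neg_le.1 (hu'.2 x)
  have hzero := (u + u').eq_zero_of_forall_nonneg fun x => by
    simpa [neg_le_iff_add_nonneg] using (hlow x).trans (hu.2 x)
  intro x
  have := LinearMap.congr_fun hzero x
  simp only [LinearMap.add_apply, LinearMap.zero_apply] at this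
  linarith [hlow x, hu.2 x]

theorem isSupportingForm_of_neg_coeff {σ : Set E} {φ : E →ₗ[ℚ] ℚ} {c : ℚ} (hc : c < 0)
    (heq : ∀ x ∈ σ, φ x + c * h x = 0) (hle : ∀ x, 0 ≤ φ x + c * h x) :
    IsSupportingForm h σ (-c⁻¹ • φ) := by
  have key : ∀ x, (-c⁻¹ • φ) x - h x = -c⁻¹ * (φ x + c * h x) := fun x => by
    have := hc.ne
    simp only [LinearMap.smul_apply, smul_eq_mul]
    field_simp
    ring
  refine ⟨fun x hx => ?_, fun x => ?_⟩
  · have := key x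
    rw [heq x hx, mul_zero, sub_eq_zero] at this
    exact this.symm
  · have : 0 ≤ -c⁻¹ * (φ x + c * h x) :=
      mul_nonneg (neg_nonneg.2 (inv_nonpos.2 hc.le)) (hle x)
    linarith [key x]

theorem exists_isSupportingForm_or_neg (hfin : Δ.Finite) (hpoly : ∀ σ ∈ Δ, IsPolyCone σ)
    (hsm : IsSupportMap Δ h) (hcomp : fanSupp Δ = Set.univ)
    (hinj : Set.InjOn Prod.fst (⋃₀ filledGraph Δ h)) {σ : Set E} (hσ : σ ∈ Δ) :
    (∃ u, IsSupportingForm h σ u) ∨ ∃ u, IsSupportingForm (-h) σ u := by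
  obtain ⟨w, hw, hσw, hface⟩ := exists_supportingForm_gammaCone hfin hpoly hsm hσ
  set φ := w.comp (LinearMap.inl ℚ E ℚ)
  set c := w (0, 1)
  have hdec : ∀ x t, w (x, t) = φ x + c * t := by
    intro x t
    have : ((x, t) : E × ℚ) = (x, 0) + t • (0, 1) := by simp
    rw [this, map_add, map_smul, smul_eq_mul, mul_comm]
    rfl
  have hle : ∀ x, 0 ≤ φ x + c * h x := fun x => hdec x (h x) ▸
    hw _ (graphOf_subset_gammaCone h (mem_graphOf (hcomp ▸ Set.mem_univ x)))
  have heq : ∀ x ∈ σ, φ x + c * h x = 0 := fun x hx => hdec x (h x) ▸ hσw x hx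
  rcases lt_trichotomy c 0 with hc | hc | hc
  · exact Or.inl ⟨_, isSupportingForm_of_neg_coeff hc heq hle⟩
  · have hφ : φ = 0 := φ.eq_zero_of_forall_nonneg fun x => by simpa [hc] using hle x
    have hw0 : ∀ p, w p = 0 := fun ⟨x, t⟩ => by simp [hdec, hφ, hc]
    have hγ : gammaCone Δ h ∈ filledGraph Δ h := by simpa [hw0] using hface
    obtain ⟨L, hL⟩ := exists_linearMap_of_gammaCone_subset_graphOf hcomp
      ((Set.subset_sUnion_of_mem hγ).trans
        (sUnion_filledGraph_subset_graphOf hfin hpoly hsm hcomp hinj))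
    exact Or.inl ⟨L, isSupportingForm_of_forall_eq hL⟩
  · exact Or.inr ⟨_, isSupportingForm_of_neg_coeff (neg_lt_zero.2 hc)
      (fun x hx => by simpa using heq x hx) (fun x => by simpa using hle x)⟩

theorem forall_isSupportingForm_or_neg
    (hP : ∀ σ ∈ Δ, (∃ u, IsSupportingForm h σ u) ∨ ∃ u, IsSupportingForm (-h) σ u) :
    (∀ σ ∈ Δ, ∃ u, IsSupportingForm h σ u) ∨ ∀ σ ∈ Δ, ∃ u, IsSupportingForm (-h) σ u := by
  refine or_iff_not_imp_left.2 fun hnP τ hτ => ?_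
  push Not at hnP
  obtain ⟨σ, hσ, hσP⟩ := hnP
  refine (hP τ hτ).resolve_left fun ⟨u, hu⟩ => ?_
  obtain ⟨u', hu'⟩ := (hP σ hσ).resolve_left fun ⟨u, hu⟩ => hσP u hu
  exact hσP u (isSupportingForm_of_forall_eq (hu.eq_of_neg hu'))

theorem hasSupportingForms_of_forall_isSupportingForm
    (hP : ∀ σ ∈ Δ, ∃ u, IsSupportingForm h σ u) : HasSupportingForms Δ h :=
  fun σ hσ => (hP σ hσ).imp fun _ hu => ⟨hu.1, fun _ _ x _ => hu.2 x⟩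

theorem IsConvexSM.hasSupportingForms_or_neg (hfin : Δ.Finite)
    (hpoly : ∀ σ ∈ Δ, IsPolyCone σ) (hcomp : fanSupp Δ = Set.univ) (hconv : IsConvexSM Δ h) :
    HasSupportingForms Δ h ∨ HasSupportingForms Δ (-h) :=
  (forall_isSupportingForm_or_neg fun _ hσ =>
    exists_isSupportingForm_or_neg hfin hpoly hconv.1 hcomp hconv.2 hσ).imp
    hasSupportingForms_of_forall_isSupportingForm hasSupportingForms_of_forall_isSupportingForm

end Criterion

end ToricQuot

open ToricQuot in
/-- **Remark 2.3.** Let `h : |Δ| → ℚ` be a support map on a fan `Δ`. If there are linear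
forms `u_σ`, `σ ∈ Δ`, on `N_ℚ` such that for any pair `σ, τ ∈ Δ` we have
`h|_σ = u_σ|_σ` and `h|_τ ≤ u_σ|_τ`, then `h` is a convex support map on `Δ`.
Conversely, if `Δ` is complete and `h` is convex, then `h` or `-h` satisfies the above
condition. -/
theorem convex_support_function_criterion (n : ℕ) (Δ : Set (Set (Fin n → ℚ)))
    (h : (Fin n → ℚ) → ℚ) (hΔ : IsFan Δ) (hsm : IsSupportMap Δ h) :
    ((∀ σ ∈ Δ, ∃ u : (Fin n → ℚ) →ₗ[ℚ] ℚ,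
        (∀ x ∈ σ, h x = u x) ∧ (∀ τ ∈ Δ, ∀ x ∈ τ, h x ≤ u x)) →
      IsConvexSM Δ h) ∧
    (fanSupp Δ = Set.univ → IsConvexSM Δ h →
      (∀ σ ∈ Δ, ∃ u : (Fin n → ℚ) →ₗ[ℚ] ℚ,
        (∀ x ∈ σ, h x = u x) ∧ (∀ τ ∈ Δ, ∀ x ∈ τ, h x ≤ u x)) ∨
      (∀ σ ∈ Δ, ∃ u : (Fin n → ℚ) →ₗ[ℚ] ℚ,
        (∀ x ∈ σ, -h x = u x) ∧ (∀ τ ∈ Δ, ∀ x ∈ τ, -h x ≤ u x))) := by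
  obtain ⟨⟨hfin, hpoly, -⟩, -⟩ := hΔ
  exact ⟨HasSupportingForms.isConvexSM hsm,
    fun hcomp hconv => hconv.hasSupportingForms_or_neg hfin hpoly hcomp⟩
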